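/- Let p ≥ 1, let F be a probability measure on [0,∞)^p admitting a density f with respect to Lebesgue measure, let γ₁,…,γ_p ≥ 0, let ρ₀ be a Lévy measure on (0,∞), and let ρ be the compound Lévy measure built from (F, ρ₀, γ). Then for every Borel set A ⊆ [0,∞)^p with 0 ∉ A, ρ(A) = ∫_A e^{-Σ_{k=1}^p γ_k w_k} [∫₀^∞ w₀^{-p} f(w₁/w₀, …, w_p/w₀) ρ₀(dw₀)] dw₁ ⋯ dw_p; that is, on [0,∞)^p ∖ {0} the measure ρ is absolutely continuous with the stated density. -/

import Mathlib

/-!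
Fix the scale `w₀ > 0`. The substitution `w = w₀ β` turns `f(β) dβ` into
`w₀^{-p} f(w / w₀) dw` and the tilt `e^{-w₀ Σ γ_k β_k}` into `e^{-Σ γ_k w_k}`, so the inner
`F`-integral defining `ρ(A)` becomes a Lebesgue integral over `A`. Tonelli then exchanges the
`w₀`- and `w`-integrals; this is legitimate because `ρ₀` is σ-finite on `(0,∞)`, having finite
integral against the positive function `min(1, w)`.
-/

open MeasureTheory Filter Set Real Topology

/-- The compound Lévy measure on `[0,∞)^p` built from a score distribution `F` on `[0,∞)^p`,
a base Lévy measure `ρ₀` on `(0,∞)` and exponential tilting parameters `γ₁,…,γ_p ≥ 0`: the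
pushforward of `e^{-w₀ Σ_k γ_k β_k} F(dβ) ρ₀(dw₀)` on `(0,∞) × [0,∞)^p` under the map
`(w₀, β) ↦ (w₀ β₁, …, w₀ β_p)`. -/
noncomputable def compoundLevy {p : ℕ} (F : Measure (Fin p → ℝ)) (ρ₀ : Measure ℝ)
    (γ : Fin p → ℝ) : Measure (Fin p → ℝ) :=
  Measure.map (fun q : ℝ × (Fin p → ℝ) => fun k => q.1 * q.2 k)
    (((ρ₀.restrict (Set.Ioi 0)).prod F).withDensity
      fun q => ENNReal.ofReal (Real.exp (-q.1 * ∑ k, γ k * q.2 k)))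

open scoped ENNReal

theorem MeasureTheory.sigmaFinite_of_lintegral_ne_top {α : Type*} [MeasurableSpace α]
    {μ : Measure α} {g : α → ℝ≥0∞} (hg : AEMeasurable g μ) (hg_ne_zero : ∀ᵐ x ∂μ, g x ≠ 0)
    (hg_int : ∫⁻ x, g x ∂μ ≠ ∞) : SigmaFinite μ := by
  -- `μ` is recovered from the finite measure `μ.withDensity g` through the density `g⁻¹`.
  have := isFiniteMeasure_withDensity hg_int
  have hg_inv : ∀ᵐ x ∂μ.withDensity g, (g x)⁻¹ ≠ ∞ :=
    withDensity_absolutelyContinuous μ g (hg_ne_zero.mono fun x hx => ENNReal.inv_ne_top.2 hx)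
  rw [← withDensity_inv_same₀ hg hg_ne_zero (ae_lt_top' hg hg_int |>.mono fun x => ne_of_lt)]
  exact SigmaFinite.withDensity_of_ne_top hg_inv

theorem sigmaFinite_restrict_Ioi_of_lintegral_min_one_lt_top {ρ₀ : Measure ℝ}
    (hρ₀ : ∫⁻ w in Ioi (0 : ℝ), ENNReal.ofReal (min 1 w) ∂ρ₀ < ⊤) :
    SigmaFinite (ρ₀.restrict (Ioi 0)) :=
  sigmaFinite_of_lintegral_ne_top (by fun_prop)
    ((ae_restrict_mem measurableSet_Ioi).mono fun w hw => by
      simpa [ENNReal.ofReal_eq_zero] using hw) hρ₀.ne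

theorem MeasureTheory.Measure.lintegral_comp_smul {E : Type*} [NormedAddCommGroup E]
    [NormedSpace ℝ E] [MeasurableSpace E] [BorelSpace E] [FiniteDimensional ℝ E]
    (μ : Measure E) [μ.IsAddHaarMeasure] (g : E → ℝ≥0∞) {r : ℝ} (hr : r ≠ 0) :
    ∫⁻ x, g (r • x) ∂μ = ENNReal.ofReal |(r ^ Module.finrank ℝ E)⁻¹| * ∫⁻ x, g x ∂μ := by
  rw [← smul_eq_mul, ← lintegral_smul_measure, ← Measure.map_addHaar_smul μ hr,
    ← MeasurableEquiv.coe_smul₀ hr, lintegral_map_equiv]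
  rfl

noncomputable def expTilt {p : ℕ} (γ : Fin p → ℝ) (w : Fin p → ℝ) : ℝ≥0∞ :=
  ENNReal.ofReal (Real.exp (-∑ k, γ k * w k))

@[fun_prop]
theorem measurable_expTilt {p : ℕ} (γ : Fin p → ℝ) : Measurable (expTilt γ) := by
  unfold expTilt; fun_prop

theorem expTilt_smul {p : ℕ} (γ : Fin p → ℝ) (r : ℝ) (β : Fin p → ℝ) :
    expTilt γ (r • β) = ENNReal.ofReal (Real.exp (-r * ∑ k, γ k * β k)) := by
  rw [expTilt, neg_mul, Finset.mul_sum]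
  congr 3
  exact Finset.sum_congr rfl fun k _ => by rw [Pi.smul_apply, smul_eq_mul]; ring

theorem compoundLevy_apply {p : ℕ} (F : Measure (Fin p → ℝ)) [SFinite F] (ρ₀ : Measure ℝ)
    (γ : Fin p → ℝ) {A : Set (Fin p → ℝ)} (hA : MeasurableSet A) :
    compoundLevy F ρ₀ γ A = ∫⁻ w₀ in Ioi 0, ∫⁻ β, A.indicator (expTilt γ) (w₀ • β) ∂F ∂ρ₀ := by
  have hsmul : Measurable fun q : ℝ × (Fin p → ℝ) => q.1 • q.2 := by fun_prop
  have hmap : (fun q : ℝ × (Fin p → ℝ) => fun k => q.1 * q.2 k) = fun q => q.1 • q.2 := rfl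
  have hdensity : Measurable fun q : ℝ × (Fin p → ℝ) =>
      ENNReal.ofReal (Real.exp (-q.1 * ∑ k, γ k * q.2 k)) := by fun_prop
  rw [compoundLevy, hmap, Measure.map_apply hsmul hA, withDensity_apply _ (hsmul hA),
    ← lintegral_indicator (hsmul hA), lintegral_prod _ (hdensity.indicator (hsmul hA)).aemeasurable]
  refine lintegral_congr fun w₀ => lintegral_congr fun β => ?_
  simp only [indicator, mem_preimage, expTilt_smul]
  rfl

theorem lintegral_comp_smul_withDensity {p : ℕ} {f : (Fin p → ℝ) → ℝ} (hf : Measurable f)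
    (h : (Fin p → ℝ) → ℝ≥0∞) {r : ℝ} (hr : 0 < r) :
    ∫⁻ β, h (r • β) ∂volume.withDensity (fun β => ENNReal.ofReal (f β)) =
      ∫⁻ w, ENNReal.ofReal (r ^ (-(p : ℝ)) * f (fun k => w k / r)) * h w := by
  set K : (Fin p → ℝ) → ℝ≥0∞ := fun w => ENNReal.ofReal (f (r⁻¹ • w)) * h w
  have hscale : ENNReal.ofReal (r ^ (-(p : ℝ))) = ENNReal.ofReal |(r ^ p)⁻¹| := by
    rw [rpow_neg hr.le, rpow_natCast, abs_of_pos (by positivity)]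
  have hdiv (w : Fin p → ℝ) : (fun k => w k / r) = r⁻¹ • w := by
    ext k; simp [div_eq_inv_mul]
  calc ∫⁻ β, h (r • β) ∂volume.withDensity (fun β => ENNReal.ofReal (f β))
      = ∫⁻ β, K (r • β) := by
        rw [lintegral_withDensity_eq_lintegral_mul_non_measurable _ hf.ennreal_ofReal
          (ae_of_all _ fun _ => ENNReal.ofReal_lt_top)]
        simp [K, inv_smul_smul₀ hr.ne']
    _ = ENNReal.ofReal (r ^ (-(p : ℝ))) * ∫⁻ w, K w := by
        rw [Measure.lintegral_comp_smul _ _ hr.ne', Module.finrank_fin_fun, hscale]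
    _ = ∫⁻ w, ENNReal.ofReal (r ^ (-(p : ℝ)) * f (fun k => w k / r)) * h w := by
        rw [← lintegral_const_mul' _ _ ENNReal.ofReal_ne_top]
        refine lintegral_congr fun w => ?_
        rw [ENNReal.ofReal_mul (by positivity), hdiv, mul_assoc]

theorem compound_levy_density_general (p : ℕ)
    (f : (Fin p → ℝ) → ℝ) (hfmeas : Measurable f)
    (F : Measure (Fin p → ℝ))
    (hF : F = volume.withDensity fun β => ENNReal.ofReal (f β))
    (γ : Fin p → ℝ)
    (ρ₀ : Measure ℝ)
    (hρ₀levy : ∫⁻ w in Set.Ioi (0 : ℝ), ENNReal.ofReal (min 1 w) ∂ρ₀ < ⊤)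
    (A : Set (Fin p → ℝ)) (hA : MeasurableSet A) :
    compoundLevy F ρ₀ γ A =
      ∫⁻ w in A, ENNReal.ofReal (Real.exp (-∑ k, γ k * w k)) *
        ∫⁻ w₀ in Set.Ioi (0 : ℝ),
          ENNReal.ofReal (w₀ ^ (-(p : ℝ)) * f (fun k => w k / w₀)) ∂ρ₀ := by
  subst hF
  have := sigmaFinite_restrict_Ioi_of_lintegral_min_one_lt_top hρ₀levy
  have hintegrand : Measurable (Function.uncurry fun (w₀ : ℝ) (w : Fin p → ℝ) =>
      ENNReal.ofReal (w₀ ^ (-(p : ℝ)) * f (fun k => w k / w₀)) * A.indicator (expTilt γ) w) := by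
    have := (measurable_expTilt γ).indicator hA
    fun_prop
  rw [compoundLevy_apply _ _ _ hA,
    setLIntegral_congr_fun measurableSet_Ioi fun w₀ hw₀ => lintegral_comp_smul_withDensity hfmeas _ hw₀,
    lintegral_lintegral_swap hintegrand.aemeasurable, ← lintegral_indicator hA]
  refine lintegral_congr fun w => ?_
  have hfinite : A.indicator (expTilt γ) w ≠ ⊤ := by
    unfold indicator; split_ifs <;> simp [expTilt]
  rw [lintegral_mul_const' _ _ hfinite, mul_comm, indicator_mul_left]
  rfl

/-- If the score distribution `F` has a density `f` (supported on the
nonnegative orthant) with respect to Lebesgue measure, then away from the origin the compound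
Lévy measure is absolutely continuous with density
`w ↦ e^{-Σ_k γ_k w_k} ∫₀^∞ w₀^(-p) f(w₁/w₀, …, w_p/w₀) ρ₀(dw₀)`: for every Borel set `A`
with `0 ∉ A`, `ρ(A) = ∫_A e^{-Σ_k γ_k w_k} [∫₀^∞ w₀^(-p) f(w/w₀) ρ₀(dw₀)] dw`. -/
theorem compound_levy_density (p : ℕ) (hp : 1 ≤ p)
    (f : (Fin p → ℝ) → ℝ) (hfmeas : Measurable f) (hfnn : ∀ β, 0 ≤ f β)
    (hfsupp : ∀ β, (∃ k, β k < 0) → f β = 0)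
    (F : Measure (Fin p → ℝ)) [IsProbabilityMeasure F]
    (hF : F = volume.withDensity fun β => ENNReal.ofReal (f β))
    (γ : Fin p → ℝ) (hγ : ∀ k, 0 ≤ γ k)
    (ρ₀ : Measure ℝ) (hρ₀supp : ρ₀ (Set.Iic 0) = 0)
    (hρ₀levy : ∫⁻ w in Set.Ioi (0 : ℝ), ENNReal.ofReal (min 1 w) ∂ρ₀ < ⊤)
    (A : Set (Fin p → ℝ)) (hA : MeasurableSet A) (hA0 : (0 : Fin p → ℝ) ∉ A) :
    compoundLevy F ρ₀ γ A =
      ∫⁻ w in A, ENNReal.ofReal (Real.exp (-∑ k, γ k * w k)) *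
        ∫⁻ w₀ in Set.Ioi (0 : ℝ),
          ENNReal.ofReal (w₀ ^ (-(p : ℝ)) * f (fun k => w k / w₀)) ∂ρ₀ :=
  compound_levy_density_general p f hfmeas F hF γ ρ₀ hρ₀levy A hA
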